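/- Let X ∈ L²(P) be the L²-limit of the renormalized-energy partial sums S_K = ∑_{k ∈ ℤ²∖{0}, |k| ≤ K} (|g_k|² − 1)/|k|², and define the renormalized energy :E: := X/2. Then for every β > −1 one has E[exp(−β·:E:)] < ∞; in particular the Gibbsian energy–enstrophy measure μ_β := Z_β^{−1} e^{−β·:E:} dP, with Z_β = E[e^{−β·:E:}] ∈ (0,∞), is a well-defined probability measure. -/

import Mathlib

open MeasureTheory ProbabilityTheory Filter Real
open scoped ENNReal NNReal

lemma aux_M_le {a : ℝ} (ha : a ≤ 1/2) :
    Real.exp (-a) * (1 - a)⁻¹ ≤ Real.exp (2 * a ^ 2) := by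
  have h1 : (0:ℝ) < 1 - a := by linarith
  have h2 : Real.exp (-a - 2*a^2) ≤ 1 - a := by
    have h3 : (a + 2*a^2) + 1 ≤ Real.exp (a + 2*a^2) := Real.add_one_le_exp _
    have h4 : (1:ℝ) ≤ (1 - a) * Real.exp (a + 2*a^2) := by
      nlinarith [Real.exp_pos (a + 2*a^2)]
    have h5 : Real.exp (-a - 2*a^2) = (Real.exp (a + 2*a^2))⁻¹ := by
      rw [← Real.exp_neg]; ring_nf
    rw [h5, inv_le_iff_one_le_mul₀ (Real.exp_pos _)]
    nlinarith [Real.exp_pos (a + 2*a^2)]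
  calc Real.exp (-a) * (1-a)⁻¹ ≤ Real.exp (-a) * (Real.exp (-a - 2*a^2))⁻¹ := by
        exact mul_le_mul_of_nonneg_left
          (inv_anti₀ (Real.exp_pos _) h2) (Real.exp_pos _).le
      _ = Real.exp (2*a^2) := by rw [← Real.exp_neg, ← Real.exp_add]; ring_nf

lemma gaussianPDFReal_half (x : ℝ) :
    gaussianPDFReal 0 (1/2) x = (Real.sqrt π)⁻¹ * Real.exp (-x^2) := by
  rw [gaussianPDFReal]
  push_cast
  norm_num
  have h2 : Real.sqrt 2 ≠ 0 := by positivity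
  field_simp

lemma integral_exp_mul_sq_gauss {a : ℝ} (ha : a < 1) :
    ∫ x, Real.exp (a * x ^ 2) ∂(gaussianReal 0 (1/2)) = (Real.sqrt (1 - a))⁻¹ := by
  have hv : (1/2 : ℝ≥0) ≠ 0 := by norm_num
  rw [gaussianReal_of_var_ne_zero 0 hv]
  have hd : (gaussianPDF 0 (1/2)) = fun x => ((gaussianPDFReal 0 (1/2) x).toNNReal : ℝ≥0∞) := by
    funext x; rfl
  rw [hd, integral_withDensity_eq_integral_smul
    (by exact (measurable_gaussianPDFReal 0 (1/2)).real_toNNReal)]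
  have : ∀ x : ℝ, (Real.toNNReal (gaussianPDFReal 0 (1/2) x)) • Real.exp (a * x ^ 2)
      = (Real.sqrt π)⁻¹ * Real.exp (-(1-a) * x^2) := by
    intro x
    rw [NNReal.smul_def, Real.coe_toNNReal _ (gaussianPDFReal_nonneg _ _ _),
      gaussianPDFReal_half]
    rw [smul_eq_mul, mul_assoc, ← Real.exp_add]
    ring_nf
  simp_rw [this]
  rw [integral_const_mul, integral_gaussian]
  rw [Real.sqrt_div (le_of_lt Real.pi_pos)]
  have hpi : Real.sqrt π ≠ 0 := by positivity
  field_simp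
/-- The standard complex Gaussian measure on `ℂ`: real and imaginary parts are
independent real centered Gaussian variables of variance `1/2`. -/
noncomputable def stdComplexGaussian : Measure ℂ :=
  Measure.map (fun p : ℝ × ℝ => Complex.equivRealProd.symm p)
    ((gaussianReal 0 (1 / 2)).prod (gaussianReal 0 (1 / 2)))

lemma measurable_equivRealProd_symm :
    Measurable (fun p : ℝ × ℝ => Complex.equivRealProd.symm p) := by
  have : Continuous (fun p : ℝ × ℝ => Complex.equivRealProd.symm p) :=
    Complex.equivRealProdCLM.symm.continuous
  exact this.measurable

lemma abs_sq_equivRealProd_symm (p : ℝ × ℝ) :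
    ‖(Complex.equivRealProd.symm p)‖ ^ 2 = p.1 ^ 2 + p.2 ^ 2 := by
  rw [Complex.sq_norm, Complex.equivRealProd_symm_apply, Complex.normSq_add_mul_I]

lemma integrable_exp_mul_sq_gauss {a : ℝ} (ha : a < 1) :
    Integrable (fun x => Real.exp (a * x ^ 2)) (gaussianReal 0 (1/2)) := by
  have hv : (1/2 : ℝ≥0) ≠ 0 := by norm_num
  rw [gaussianReal_of_var_ne_zero 0 hv]
  have hd : (gaussianPDF 0 (1/2)) = fun x => ((gaussianPDFReal 0 (1/2) x).toNNReal : ℝ≥0∞) := by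
    funext x; rfl
  rw [hd, integrable_withDensity_iff_integrable_smul
    (by exact (measurable_gaussianPDFReal 0 (1/2)).real_toNNReal)]
  have heq : ∀ x : ℝ, (Real.toNNReal (gaussianPDFReal 0 (1/2) x)) • Real.exp (a * x ^ 2)
      = (Real.sqrt π)⁻¹ * Real.exp (-(1-a) * x^2) := by
    intro x
    rw [NNReal.smul_def, Real.coe_toNNReal _ (gaussianPDFReal_nonneg _ _ _),
      gaussianPDFReal_half, smul_eq_mul, mul_assoc, ← Real.exp_add]
    ring_nf
  simp_rw [heq]
  exact (integrable_exp_neg_mul_sq (by linarith)).const_mul _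

lemma integrable_exp_mul_abs_sq_std {a : ℝ} (ha : a < 1) :
    Integrable (fun z : ℂ => Real.exp (a * ‖z‖ ^ 2)) stdComplexGaussian := by
  rw [stdComplexGaussian, integrable_map_measure
    (by exact (Real.continuous_exp.comp (continuous_const.mul
      ((continuous_norm).pow 2))).aestronglyMeasurable)
    measurable_equivRealProd_symm.aemeasurable]
  have : (fun p : ℝ × ℝ => Real.exp (a * ‖(Complex.equivRealProd.symm p)‖ ^ 2))
      = fun p : ℝ × ℝ => Real.exp (a * p.1 ^ 2) * Real.exp (a * p.2 ^ 2) := by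
    funext p
    rw [abs_sq_equivRealProd_symm, ← Real.exp_add]
    ring_nf
  rw [show ((fun z : ℂ => Real.exp (a * ‖z‖ ^ 2)) ∘
      (fun p : ℝ × ℝ => Complex.equivRealProd.symm p))
      = fun p : ℝ × ℝ => Real.exp (a * p.1 ^ 2) * Real.exp (a * p.2 ^ 2) from this]
  exact (integrable_exp_mul_sq_gauss ha).mul_prod (integrable_exp_mul_sq_gauss ha)

lemma integral_exp_mul_abs_sq_std {a : ℝ} (ha : a < 1) :
    ∫ z, Real.exp (a * ‖z‖ ^ 2) ∂stdComplexGaussian = (1 - a)⁻¹ := by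
  rw [stdComplexGaussian, integral_map measurable_equivRealProd_symm.aemeasurable
    (by exact (Real.continuous_exp.comp (continuous_const.mul
      ((continuous_norm).pow 2))).aestronglyMeasurable)]
  have : ∀ p : ℝ × ℝ, Real.exp (a * ‖(Complex.equivRealProd.symm p)‖ ^ 2)
      = Real.exp (a * p.1 ^ 2) * Real.exp (a * p.2 ^ 2) := by
    intro p
    rw [abs_sq_equivRealProd_symm, ← Real.exp_add]
    ring_nf
  simp_rw [this]
  rw [integral_prod_mul (f := fun x : ℝ => Real.exp (a * x ^ 2))
    (g := fun x : ℝ => Real.exp (a * x ^ 2)), integral_exp_mul_sq_gauss ha,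
    ← mul_inv, Real.mul_self_sqrt (by linarith)]

lemma factor_integral {Ω : Type*} [MeasurableSpace Ω] {P : Measure Ω} {gk : Ω → ℂ}
    (hgm : Measurable gk) (hlaw : Measure.map gk P = stdComplexGaussian)
    {a : ℝ} (ha : a < 1) :
    (∫ ω, Real.exp (a * (‖(gk ω)‖ ^ 2 - 1)) ∂P = Real.exp (-a) * (1 - a)⁻¹) ∧
    Integrable (fun ω => Real.exp (a * (‖(gk ω)‖ ^ 2 - 1))) P := by
  have hcont : Continuous (fun z : ℂ => Real.exp (a * (‖z‖ ^ 2 - 1))) :=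
    Real.continuous_exp.comp (continuous_const.mul ((continuous_norm.pow 2).sub
      continuous_const))
  have hsplit : (fun z : ℂ => Real.exp (a * (‖z‖ ^ 2 - 1)))
      = fun z : ℂ => Real.exp (-a) * Real.exp (a * ‖z‖ ^ 2) := by
    funext z; rw [← Real.exp_add]; ring_nf
  constructor
  · have h1 : ∫ ω, Real.exp (a * (‖(gk ω)‖ ^ 2 - 1)) ∂P
        = ∫ z, Real.exp (a * (‖z‖ ^ 2 - 1)) ∂stdComplexGaussian := by
      rw [← hlaw, integral_map hgm.aemeasurable hcont.aestronglyMeasurable]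
    rw [h1, hsplit, integral_const_mul, integral_exp_mul_abs_sq_std ha]
  · have h2 : Integrable (fun z : ℂ => Real.exp (a * (‖z‖ ^ 2 - 1)))
        stdComplexGaussian := by
      rw [hsplit]
      exact (integrable_exp_mul_abs_sq_std ha).const_mul _
    have := (integrable_map_measure hcont.aestronglyMeasurable hgm.aemeasurable).mp
      (by rwa [hlaw])
    exact this

lemma int_norm_ge_one {k : ℤ × ℤ} (hk : k ≠ 0) : 1 ≤ k.1 ^ 2 + k.2 ^ 2 := by
  rcases eq_or_ne k.1 0 with h | h
  · have h2 : k.2 ≠ 0 := fun h2 => hk (Prod.ext h h2)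
    nlinarith [Int.one_le_abs h2, sq_abs k.2, sq_nonneg k.1, abs_nonneg k.2]
  · nlinarith [Int.one_le_abs h, sq_abs k.1, sq_nonneg k.2, abs_nonneg k.1]

lemma summable_v : Summable (fun n : ℤ => ((1:ℝ) + (n:ℝ) ^ 2)⁻¹) := by
  have h1 : Summable (fun n : ℕ => (((n:ℝ)) ^ 2)⁻¹) := by
    have := Real.summable_one_div_nat_pow.mpr (by norm_num : 1 < 2)
    simpa [one_div] using this
  have h2 : Summable (fun n : ℕ => ((((n+1:ℕ)):ℝ) ^ 2)⁻¹) :=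
    h1.comp_injective Nat.succ_injective
  have hv : Summable (fun n : ℕ => ((1:ℝ) + (n:ℝ) ^ 2)⁻¹) := by
    refine Summable.of_nonneg_of_le (fun n => by positivity) (fun n => ?_) (h2.mul_left 2)
    have hpos : (0:ℝ) < ((n:ℝ)+1) ^ 2 := by positivity
    have hpos2 : (0:ℝ) < 1 + (n:ℝ) ^ 2 := by positivity
    push_cast
    calc ((1:ℝ)+(n:ℝ)^2)⁻¹ ≤ (((n:ℝ)+1)^2/2)⁻¹ := inv_anti₀ (by positivity) (by nlinarith [sq_nonneg ((n:ℝ)-1)])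
      _ = 2 * (((n:ℝ)+1)^2)⁻¹ := by rw [inv_div, div_eq_mul_inv]
  apply Summable.of_nat_of_neg
  · simpa using hv
  · simpa using hv

lemma wt_bound {k : ℤ × ℤ} (hk : k ≠ 0) :
    ((((k.1 ^ 2 + k.2 ^ 2 : ℤ)):ℝ)⁻¹) ^ 2
      ≤ 4 * (((1:ℝ) + (k.1:ℝ) ^ 2)⁻¹ * ((1:ℝ) + (k.2:ℝ) ^ 2)⁻¹) := by
  have h1 : (1:ℝ) ≤ (k.1:ℝ) ^ 2 + (k.2:ℝ) ^ 2 := by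
    have := int_norm_ge_one hk
    push_cast
    exact_mod_cast this
  set A := (k.1:ℝ) ^ 2 with hA
  set B := (k.2:ℝ) ^ 2 with hB
  have hA0 : 0 ≤ A := sq_nonneg _
  have hB0 : 0 ≤ B := sq_nonneg _
  have hcast : (((k.1 ^ 2 + k.2 ^ 2 : ℤ)):ℝ) = A + B := by push_cast; rfl
  rw [hcast, inv_pow]
  have hle : (1 + A) * (1 + B) / 4 ≤ (A + B) ^ 2 := by nlinarith
  calc ((A + B) ^ 2)⁻¹ ≤ ((1 + A) * (1 + B) / 4)⁻¹ := by
        apply inv_anti₀ (by positivity) hle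
      _ = 4 * ((1 + A)⁻¹ * (1 + B)⁻¹) := by
        rw [← mul_inv]
        field_simp

/-- The finite set `{k ∈ ℤ² ∖ {0} : |k| ≤ K}`. -/
noncomputable def ballZ (K : ℕ) : Finset (ℤ × ℤ) :=
  ((Finset.Icc (-(K : ℤ), -(K : ℤ)) ((K : ℤ), (K : ℤ))).erase (0, 0)).filter
    fun k => k.1 ^ 2 + k.2 ^ 2 ≤ (K : ℤ) ^ 2

/-- The renormalized-energy partial sum `S_K = ∑_{0<|k|≤K} (|g_k|² − 1)/|k|²`. -/
noncomputable def partialSum {Ω : Type*} (g : ℤ × ℤ → Ω → ℂ) (K : ℕ) (ω : Ω) : ℝ :=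
  ∑ k ∈ ballZ K, (‖g k ω‖ ^ 2 - 1) / ((k.1 ^ 2 + k.2 ^ 2 : ℤ) : ℝ)

lemma ballZ_ne_zero {K : ℕ} {k : ℤ × ℤ} (h : k ∈ ballZ K) : k ≠ 0 := by
  simp only [ballZ, Finset.mem_filter, Finset.mem_erase] at h
  exact h.1.1

lemma neg_mem_ballZ {K : ℕ} {k : ℤ × ℤ} (h : k ∈ ballZ K) : -k ∈ ballZ K := by
  simp only [ballZ, Finset.mem_filter, Finset.mem_erase, Finset.mem_Icc, Prod.mk_le_mk] at h ⊢
  obtain ⟨⟨hne, ⟨h1, h2⟩, h3, h4⟩, h5⟩ := h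
  have e1 : (-k).1 = -k.1 := rfl
  have e2 : (-k).2 = -k.2 := rfl
  refine ⟨⟨?_, ⟨?_, ?_⟩, ?_, ?_⟩, ?_⟩
  · intro hc
    apply hne
    have : k = -(0, 0) := by rw [← hc, neg_neg]
    simpa using this
  · rw [e1]; omega
  · rw [e2]; omega
  · rw [e1]; omega
  · rw [e2]; omega
  · rw [e1, e2]
    have : (-k.1) ^ 2 + (-k.2) ^ 2 = k.1 ^ 2 + k.2 ^ 2 := by ring
    omega

lemma partialSum_pair {Ω : Type*} (g : ℤ × ℤ → Ω → ℂ) (S : Set (ℤ × ℤ))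
    [DecidablePred (· ∈ S)]
    (hSone : ∀ k : ℤ × ℤ, k ≠ 0 → Xor' (k ∈ S) (-k ∈ S))
    (hgconj : ∀ k ∈ S, g (-k) = fun ω => (starRingEnd ℂ) (g k ω))
    (K : ℕ) (ω : Ω) :
    partialSum g K ω = 2 * ∑ k ∈ (ballZ K).filter (· ∈ S),
      (‖(g k ω)‖ ^ 2 - 1) / ((k.1 ^ 2 + k.2 ^ 2 : ℤ) : ℝ) := by
  set f : ℤ × ℤ → ℝ := fun k => (‖(g k ω)‖ ^ 2 - 1) / ((k.1 ^ 2 + k.2 ^ 2 : ℤ) : ℝ)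
    with hf
  have hswap : ∑ k ∈ (ballZ K).filter (fun k => ¬ k ∈ S), f k
      = ∑ k ∈ (ballZ K).filter (· ∈ S), f k := by
    refine Finset.sum_nbij' (i := fun k => -k) (j := fun k => -k) ?_ ?_ ?_ ?_ ?_
    · intro k hk
      simp only [Finset.mem_filter] at hk ⊢
      have hk0 := ballZ_ne_zero hk.1
      refine ⟨neg_mem_ballZ hk.1, ?_⟩
      rcases hSone k hk0 with ⟨hin, hnin⟩ | ⟨hin, hnin⟩
      · exact absurd hin hk.2
      · exact hin
    · intro k hk
      simp only [Finset.mem_filter] at hk ⊢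
      have hk0 := ballZ_ne_zero hk.1
      refine ⟨neg_mem_ballZ hk.1, ?_⟩
      rcases hSone k hk0 with ⟨hin, hnin⟩ | ⟨hin, hnin⟩
      · exact hnin
      · exact absurd hk.2 hnin
    · intro k _; exact neg_neg k
    · intro k _; exact neg_neg k
    · intro k hk
      simp only [Finset.mem_filter] at hk
      have hk0 := ballZ_ne_zero hk.1
      have hmem : -k ∈ S := by
        rcases hSone k hk0 with ⟨hin, _⟩ | ⟨hin, _⟩
        · exact absurd hin hk.2
        · exact hin
      have hcc := hgconj (-k) hmem
      rw [neg_neg] at hcc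
      have habs : ‖(g k ω)‖ = ‖(g (-k) ω)‖ := by
        rw [hcc]
        exact Complex.norm_conj _
      rw [hf]
      simp only
      rw [habs]
      have e1 : (-k).1 = -k.1 := rfl
      have e2 : (-k).2 = -k.2 := rfl
      rw [e1, e2]
      have : (-k.1) ^ 2 + (-k.2) ^ 2 = k.1 ^ 2 + k.2 ^ 2 := by ring
      rw [this]
  have hsplit := Finset.sum_filter_add_sum_filter_not (ballZ K) (fun k => k ∈ S) f
  have : partialSum g K ω = ∑ k ∈ ballZ K, f k := rfl
  rw [this, ← hsplit, hswap]
  ring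

lemma card_unit_le (T : Finset (ℤ × ℤ)) :
    (T.filter (fun k => ((k.1 ^ 2 + k.2 ^ 2 : ℤ) : ℝ) = 1)).card ≤ 4 := by
  have hsub : T.filter (fun k => ((k.1 ^ 2 + k.2 ^ 2 : ℤ) : ℝ) = 1)
      ⊆ ({(1, 0), (-1, 0), (0, 1), (0, -1)} : Finset (ℤ × ℤ)) := by
    intro k hk
    simp only [Finset.mem_filter] at hk
    obtain ⟨-, hk1'⟩ := hk
    have hk1 : k.1 ^ 2 + k.2 ^ 2 = 1 := by exact_mod_cast hk1'
    have hx1 : k.1 ≤ 1 := by nlinarith [sq_nonneg k.2, sq_nonneg (k.1 - 1)]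
    have hx2 : -1 ≤ k.1 := by nlinarith [sq_nonneg k.2, sq_nonneg (k.1 + 1)]
    have hy1 : k.2 ≤ 1 := by nlinarith [sq_nonneg k.1, sq_nonneg (k.2 - 1)]
    have hy2 : -1 ≤ k.2 := by nlinarith [sq_nonneg k.1, sq_nonneg (k.2 + 1)]
    have hk' : k = (k.1, k.2) := rfl
    simp only [Finset.mem_insert, Finset.mem_singleton, Prod.ext_iff]
    interval_cases h1 : k.1 <;> interval_cases h2 : k.2 <;> simp_all <;> omega
  calc (T.filter (fun k => ((k.1 ^ 2 + k.2 ^ 2 : ℤ) : ℝ) = 1)).card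
      ≤ ({(1, 0), (-1, 0), (0, 1), (0, -1)} : Finset (ℤ × ℤ)).card := Finset.card_le_card hsub
    _ ≤ 4 := by decide

lemma summable_wt : Summable (fun k : ℤ × ℤ =>
    4 * (((1:ℝ) + (k.1:ℝ) ^ 2)⁻¹ * ((1:ℝ) + (k.2:ℝ) ^ 2)⁻¹)) :=
  (summable_v.mul_of_nonneg summable_v (fun n => by positivity) (fun n => by positivity)).mul_left 4

set_option maxHeartbeats 1000000 in
lemma mgf_partialSum_bound {Ω : Type*} {mΩ : MeasurableSpace Ω} (P : Measure Ω)
    [IsProbabilityMeasure P]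
    (S : Set (ℤ × ℤ)) [DecidablePred (· ∈ S)] (hS0 : ∀ k ∈ S, k ≠ 0)
    (hSone : ∀ k : ℤ × ℤ, k ≠ 0 → Xor' (k ∈ S) (-k ∈ S))
    (g : ℤ × ℤ → Ω → ℂ) (hgmeas : ∀ k, Measurable (g k))
    (hglaw : ∀ k ∈ S, Measure.map (g k) P = stdComplexGaussian)
    (hgindep : iIndepFun (fun k : S => g k) P)
    (hgconj : ∀ k ∈ S, g (-k) = fun ω => (starRingEnd ℂ) (g k ω))
    (t : ℝ) (ht : t < 1/2) :
    ∃ C : ℝ, ∀ K : ℕ,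
      Integrable (fun ω => Real.exp (t * partialSum g K ω)) P ∧
      ∫ ω, Real.exp (t * partialSum g K ω) ∂P ≤ C := by
  set ν : ℤ × ℤ → ℝ := fun k => ((k.1 ^ 2 + k.2 ^ 2 : ℤ) : ℝ) with hν
  set a : ℤ × ℤ → ℝ := fun k => 2 * t / ν k with ha
  have hν1 : ∀ k : ℤ × ℤ, k ≠ 0 → 1 ≤ ν k := by
    intro k hk
    have h := int_norm_ge_one hk
    show (1:ℝ) ≤ ((k.1 ^ 2 + k.2 ^ 2 : ℤ) : ℝ)
    exact_mod_cast h
  have ha1 : ∀ k : ℤ × ℤ, k ≠ 0 → a k < 1 := by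
    intro k hk
    rcases le_or_gt t 0 with h | h
    · have : a k ≤ 0 := div_nonpos_of_nonpos_of_nonneg (by linarith) (by linarith [hν1 k hk])
      linarith
    · have h2 : a k ≤ 2 * t := div_le_self (by linarith) (hν1 k hk)
      linarith
  set Y : S → Ω → ℝ := fun i ω => a i * (‖(g i ω)‖ ^ 2 - 1) with hY
  have hYmeas : ∀ i : S, Measurable (Y i) := fun i =>
    (((continuous_norm.measurable.comp (hgmeas i)).pow_const 2).sub
      measurable_const).const_mul _
  have hYindep : iIndepFun Y P := by
    have := hgindep.comp (fun i : S => fun z : ℂ => a i * (‖z‖ ^ 2 - 1))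
      (fun i => ((continuous_norm.measurable.pow_const 2).sub
        measurable_const).const_mul _)
    exact this
  have hfact : ∀ i : S, (∫ ω, Real.exp (1 * Y i ω) ∂P = Real.exp (-(a i)) * (1 - a i)⁻¹)
      ∧ Integrable (fun ω => Real.exp (1 * Y i ω)) P := by
    intro i
    have h := factor_integral (hgmeas i) (hglaw i i.2) (ha1 i (hS0 i i.2))
    simp only [hY, one_mul]
    exact h
  set Sig : ℝ := ∑' k : ℤ × ℤ, 4 * (((1:ℝ) + (k.1:ℝ) ^ 2)⁻¹ * ((1:ℝ) + (k.2:ℝ) ^ 2)⁻¹) with hSig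
  set B : ℝ := max 1 (Real.exp (-(2 * t)) * (1 - 2 * t)⁻¹) with hB
  have hB1 : (1:ℝ) ≤ B := le_max_left _ _
  refine ⟨B ^ 4 * Real.exp (2 * (2 * t) ^ 2 * Sig), fun K => ?_⟩
  set T₀ : Finset (ℤ × ℤ) := (ballZ K).filter (· ∈ S) with hT₀
  have hTsub : ∀ k ∈ T₀, k ≠ 0 := fun k hk => ballZ_ne_zero (Finset.mem_filter.mp hk).1
  have hrw : (fun ω => Real.exp (t * partialSum g K ω))
      = fun ω => Real.exp (1 * (∑ i ∈ (ballZ K).subtype (· ∈ S), Y i) ω) := by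
    funext ω
    rw [one_mul, Finset.sum_apply, partialSum_pair g S hSone hgconj K ω]
    congr 1
    simp only [hY]
    rw [Finset.sum_subtype_eq_sum_filter
      (fun k => a k * (‖(g k ω)‖ ^ 2 - 1)) (s := ballZ K) (p := (· ∈ S))]
    rw [Finset.mul_sum, Finset.mul_sum]
    apply Finset.sum_congr rfl
    intro k hk
    simp only [ha]
    ring
  have hint : Integrable (fun ω => Real.exp (t * partialSum g K ω)) P := by
    rw [hrw]
    exact iIndepFun.integrable_exp_mul_sum hYindep hYmeas (fun i _ => (hfact i).2)
  refine ⟨hint, ?_⟩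
  have hmgf : ∫ ω, Real.exp (t * partialSum g K ω) ∂P
      = ∏ i ∈ (ballZ K).subtype (· ∈ S), (Real.exp (-(a i)) * (1 - a i)⁻¹) := by
    have h1 : ∫ ω, Real.exp (t * partialSum g K ω) ∂P
        = mgf (∑ i ∈ (ballZ K).subtype (· ∈ S), Y i) P 1 := by
      rw [mgf]
      exact congrArg (fun f => ∫ ω, f ω ∂P) hrw
    rw [h1, hYindep.mgf_sum hYmeas]
    exact Finset.prod_congr rfl fun i _ => by rw [mgf]; exact (hfact i).1
  rw [hmgf, Finset.prod_subtype_eq_prod_filter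
    (fun k => Real.exp (-(a k)) * (1 - a k)⁻¹) (s := ballZ K) (p := (· ∈ S)), ← hT₀]
  have hM0 : ∀ k ∈ T₀, 0 ≤ Real.exp (-(a k)) * (1 - a k)⁻¹ := fun k hk =>
    mul_nonneg (Real.exp_pos _).le (inv_nonneg.mpr (by linarith [ha1 k (hTsub k hk)]))
  have hstep : ∀ k ∈ T₀, Real.exp (-(a k)) * (1 - a k)⁻¹
      ≤ (if ν k = 1 then B else 1) * Real.exp (2 * (a k) ^ 2) := by
    intro k hk
    by_cases h1 : ν k = 1
    · rw [if_pos h1]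
      have hak : a k = 2 * t := by rw [ha]; simp only [h1, div_one]
      have h2 : Real.exp (-(a k)) * (1 - a k)⁻¹ ≤ B := by
        rw [hak, hB]; exact le_max_right _ _
      calc Real.exp (-(a k)) * (1 - a k)⁻¹ ≤ B := h2
        _ ≤ B * Real.exp (2 * (a k) ^ 2) :=
          le_mul_of_one_le_right (by linarith) (Real.one_le_exp (by positivity))
    · rw [if_neg h1, one_mul]
      apply aux_M_le
      have hν2 : 2 ≤ ν k := by
        have hint1 : 1 ≤ (k.1 ^ 2 + k.2 ^ 2 : ℤ) := int_norm_ge_one (hTsub k hk)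
        have hne : (k.1 ^ 2 + k.2 ^ 2 : ℤ) ≠ 1 := by
          intro hc
          apply h1
          show ((k.1 ^ 2 + k.2 ^ 2 : ℤ) : ℝ) = 1
          exact_mod_cast hc
        have h2 : 2 ≤ (k.1 ^ 2 + k.2 ^ 2 : ℤ) := by omega
        show (2:ℝ) ≤ ((k.1 ^ 2 + k.2 ^ 2 : ℤ) : ℝ)
        exact_mod_cast h2
      rcases le_or_gt t 0 with h | h
      · have : a k ≤ 0 := div_nonpos_of_nonpos_of_nonneg (by linarith) (by linarith)
        linarith
      · have h3 : a k ≤ 2 * t / 2 := by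
          show 2 * t / ν k ≤ 2 * t / 2
          rw [div_le_div_iff₀ (by linarith) (by norm_num : (0:ℝ) < 2)]
          nlinarith
        have h4 : 2 * t / 2 = t := by ring
        rw [h4] at h3
        linarith
  have hprodle : (∏ k ∈ T₀, (Real.exp (-(a k)) * (1 - a k)⁻¹))
      ≤ ∏ k ∈ T₀, ((if ν k = 1 then B else 1) * Real.exp (2 * (a k) ^ 2)) :=
    Finset.prod_le_prod hM0 hstep
  have hsplit : (∏ k ∈ T₀, ((if ν k = 1 then B else 1) * Real.exp (2 * (a k) ^ 2)))
      = (∏ k ∈ T₀, (if ν k = 1 then B else 1)) * ∏ k ∈ T₀, Real.exp (2 * (a k) ^ 2) :=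
    Finset.prod_mul_distrib
  have hprod1 : (∏ k ∈ T₀, (if ν k = 1 then B else 1)) ≤ B ^ 4 := by
    classical
    rw [Finset.prod_ite, Finset.prod_const, Finset.prod_const_one, mul_one]
    exact pow_le_pow_right₀ hB1 (card_unit_le T₀)
  have hprod2 : (∏ k ∈ T₀, Real.exp (2 * (a k) ^ 2)) ≤ Real.exp (2 * (2 * t) ^ 2 * Sig) := by
    rw [← Real.exp_sum]
    apply Real.exp_le_exp.mpr
    have hterm : ∀ k ∈ T₀, 2 * (a k) ^ 2 = 2 * (2 * t) ^ 2 * ((ν k)⁻¹) ^ 2 := by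
      intro k hk
      simp only [ha]
      ring
    rw [Finset.sum_congr rfl hterm, ← Finset.mul_sum]
    have hsum : ∑ k ∈ T₀, ((ν k)⁻¹) ^ 2 ≤ Sig := by
      calc ∑ k ∈ T₀, ((ν k)⁻¹) ^ 2
          ≤ ∑ k ∈ T₀, 4 * (((1:ℝ) + (k.1:ℝ) ^ 2)⁻¹ * ((1:ℝ) + (k.2:ℝ) ^ 2)⁻¹) :=
            Finset.sum_le_sum (fun k hk => wt_bound (hTsub k hk))
        _ ≤ Sig := Summable.sum_le_tsum T₀ (fun k _ => by positivity) summable_wt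
    exact mul_le_mul_of_nonneg_left hsum (by positivity)
  calc (∏ k ∈ T₀, (Real.exp (-(a k)) * (1 - a k)⁻¹))
      ≤ (∏ k ∈ T₀, (if ν k = 1 then B else 1)) * ∏ k ∈ T₀, Real.exp (2 * (a k) ^ 2) := by
        rw [← hsplit]; exact hprodle
    _ ≤ B ^ 4 * Real.exp (2 * (2 * t) ^ 2 * Sig) := by
        apply mul_le_mul hprod1 hprod2 (Finset.prod_nonneg (fun k _ => (Real.exp_pos _).le))
          (by positivity)

lemma sq_le_exp_aux (x : ℝ) :
    x ^ 2 ≤ 64 * (Real.exp ((1/4) * x) + Real.exp ((-(1/4)) * x)) := by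
  rcases le_total 0 x with h | h
  · have h1 : Real.exp ((1/8) * x) ^ 2 = Real.exp ((1/4) * x) := by
      rw [sq, ← Real.exp_add]; ring_nf
    nlinarith [Real.add_one_le_exp ((1/8) * x), Real.exp_pos ((-(1/4)) * x),
      Real.exp_pos ((1/8) * x)]
  · have h1 : Real.exp ((-(1/8)) * x) ^ 2 = Real.exp ((-(1/4)) * x) := by
      rw [sq, ← Real.exp_add]; ring_nf
    nlinarith [Real.add_one_le_exp ((-(1/8)) * x), Real.exp_pos ((1/4) * x),
      Real.exp_pos ((-(1/8)) * x)]

set_option maxHeartbeats 1000000 in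
theorem stmt15 {Ω : Type*} {mΩ : MeasurableSpace Ω} (P : Measure Ω) [IsProbabilityMeasure P]
    (S : Set (ℤ × ℤ)) (hS0 : ∀ k ∈ S, k ≠ 0)
    (hSone : ∀ k : ℤ × ℤ, k ≠ 0 → Xor' (k ∈ S) (-k ∈ S))
    (g : ℤ × ℤ → Ω → ℂ) (hgmeas : ∀ k, Measurable (g k))
    (hglaw : ∀ k ∈ S, Measure.map (g k) P = stdComplexGaussian)
    (hgindep : iIndepFun (fun k : S => g k) P)
    (hgconj : ∀ k ∈ S, g (-k) = fun ω => (starRingEnd ℂ) (g k ω))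
    (X : Ω → ℝ) (hX : MemLp X 2 P)
    (hXlim : Filter.Tendsto (fun K => ∫ ω, (partialSum g K ω - X ω) ^ 2 ∂P)
      Filter.atTop (nhds 0))
    (β : ℝ) (hβ : -1 < β) :
    Integrable (fun ω => Real.exp (-β * (X ω / 2))) P ∧
    (0 < ∫ ω, Real.exp (-β * (X ω / 2)) ∂P) ∧
    IsProbabilityMeasure (P.withDensity fun ω =>
      ENNReal.ofReal (Real.exp (-β * (X ω / 2)) / ∫ ω', Real.exp (-β * (X ω' / 2)) ∂P)) := by
  classical
  have hSmeas : ∀ K : ℕ, Measurable (partialSum g K) := by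
    intro K
    apply Finset.measurable_sum
    intro k _
    exact (((continuous_norm.measurable.comp (hgmeas k)).pow_const 2).sub
      measurable_const).div_const _
  set t : ℝ := -β / 2 with htdef
  have ht : t < 1/2 := by rw [htdef]; linarith
  obtain ⟨C, hC⟩ := mgf_partialSum_bound P S hS0 hSone g hgmeas hglaw hgindep hgconj t ht
  obtain ⟨C₁, hC₁⟩ := mgf_partialSum_bound P S hS0 hSone g hgmeas hglaw hgindep hgconj
    (1/4) (by norm_num)
  obtain ⟨C₂, hC₂⟩ := mgf_partialSum_bound P S hS0 hSone g hgmeas hglaw hgindep hgconj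
    (-(1/4)) (by norm_num)
  have hX2 : Integrable (fun ω => (X ω) ^ 2) P := hX.integrable_sq
  have hSK2 : ∀ K, Integrable (fun ω => (partialSum g K ω) ^ 2) P := by
    intro K
    refine Integrable.mono' (((hC₁ K).1.add (hC₂ K).1).const_mul 64)
      ((hSmeas K).pow_const 2).aestronglyMeasurable ?_
    filter_upwards with ω
    rw [Real.norm_eq_abs, abs_of_nonneg (sq_nonneg _)]
    simp only [Pi.add_apply]
    exact sq_le_exp_aux _
  have hdiff2 : ∀ K, Integrable (fun ω => (partialSum g K ω - X ω) ^ 2) P := by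
    intro K
    refine Integrable.mono' (((hSK2 K).const_mul 2).add (hX2.const_mul 2)) ?_ ?_
    · exact (((hSmeas K).aemeasurable.sub hX.aestronglyMeasurable.aemeasurable).pow_const
        2).aestronglyMeasurable
    · filter_upwards with ω
      rw [Real.norm_eq_abs, abs_of_nonneg (sq_nonneg _)]
      simp only [Pi.add_apply]
      nlinarith [sq_nonneg (partialSum g K ω + X ω), sq_nonneg (partialSum g K ω - X ω)]
  have hTIM : TendstoInMeasure P (fun K => partialSum g K) atTop X := by
    rw [tendstoInMeasure_iff_dist]
    intro ε hε
    have hb : ∀ K, P {ω | ε ≤ dist (partialSum g K ω) (X ω)}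
        ≤ (ENNReal.ofReal (ε ^ 2))⁻¹
          * ENNReal.ofReal (∫ ω, (partialSum g K ω - X ω) ^ 2 ∂P) := by
      intro K
      have hsub : {ω | ε ≤ dist (partialSum g K ω) (X ω)}
          ⊆ {ω | ENNReal.ofReal (ε ^ 2)
              ≤ ENNReal.ofReal ((partialSum g K ω - X ω) ^ 2)} := by
        intro ω hω
        simp only [Set.mem_setOf_eq, Real.dist_eq] at hω ⊢
        apply ENNReal.ofReal_le_ofReal
        calc ε ^ 2 ≤ |partialSum g K ω - X ω| ^ 2 := by
              apply pow_le_pow_left₀ hε.le hω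
          _ = (partialSum g K ω - X ω) ^ 2 := sq_abs _
      have hmeas : AEMeasurable (fun ω => ENNReal.ofReal ((partialSum g K ω - X ω) ^ 2)) P :=
        (((hSmeas K).aemeasurable.sub hX.aestronglyMeasurable.aemeasurable).pow_const
          2).ennreal_ofReal
      calc P {ω | ε ≤ dist (partialSum g K ω) (X ω)}
          ≤ P {ω | ENNReal.ofReal (ε ^ 2)
              ≤ ENNReal.ofReal ((partialSum g K ω - X ω) ^ 2)} := measure_mono hsub
        _ ≤ (ENNReal.ofReal (ε ^ 2))⁻¹
            * ∫⁻ ω, ENNReal.ofReal ((partialSum g K ω - X ω) ^ 2) ∂P := by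
            rw [← ENNReal.div_eq_inv_mul]
            exact meas_ge_le_lintegral_div hmeas
              (by simp [hε, pow_pos, hε.ne']) ENNReal.ofReal_ne_top
        _ = (ENNReal.ofReal (ε ^ 2))⁻¹
            * ENNReal.ofReal (∫ ω, (partialSum g K ω - X ω) ^ 2 ∂P) := by
            rw [← ofReal_integral_eq_lintegral_ofReal (hdiff2 K)
              (ae_of_all _ fun ω => sq_nonneg _)]
    have hup : Tendsto (fun K => (ENNReal.ofReal (ε ^ 2))⁻¹
        * ENNReal.ofReal (∫ ω, (partialSum g K ω - X ω) ^ 2 ∂P)) atTop (nhds 0) := by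
      have h1 : Tendsto (fun K => ENNReal.ofReal (∫ ω, (partialSum g K ω - X ω) ^ 2 ∂P))
          atTop (nhds 0) := by
        have := (ENNReal.continuous_ofReal.tendsto 0).comp hXlim
        simpa [Function.comp_def] using this
      have h2 := ENNReal.Tendsto.const_mul (a := (ENNReal.ofReal (ε ^ 2))⁻¹) h1
        (Or.inr (ENNReal.inv_ne_top.mpr (by simp [hε, pow_pos, hε.ne'])))
      simpa using h2
    exact tendsto_of_tendsto_of_tendsto_of_le_of_le tendsto_const_nhds hup
      (fun K => zero_le) hb
  obtain ⟨ns, -, hae⟩ := hTIM.exists_seq_tendsto_ae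
  have hFbound : ∫⁻ ω, ENNReal.ofReal (Real.exp (t * X ω)) ∂P ≤ ENNReal.ofReal C := by
    have hlim : ∀ᵐ ω ∂P, ENNReal.ofReal (Real.exp (t * X ω))
        = Filter.liminf (fun j => ENNReal.ofReal (Real.exp (t * partialSum g (ns j) ω)))
          atTop := by
      filter_upwards [hae] with ω hω
      exact (Filter.Tendsto.liminf_eq ((ENNReal.continuous_ofReal.tendsto _).comp
        ((Real.continuous_exp.tendsto _).comp (hω.const_mul t)))).symm
    have hjb : ∀ j, ∫⁻ ω, ENNReal.ofReal (Real.exp (t * partialSum g (ns j) ω)) ∂P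
        ≤ ENNReal.ofReal C := by
      intro j
      rw [← ofReal_integral_eq_lintegral_ofReal (hC (ns j)).1
        (ae_of_all _ fun ω => (Real.exp_pos _).le)]
      exact ENNReal.ofReal_le_ofReal (hC (ns j)).2
    calc ∫⁻ ω, ENNReal.ofReal (Real.exp (t * X ω)) ∂P
        = ∫⁻ ω, Filter.liminf
            (fun j => ENNReal.ofReal (Real.exp (t * partialSum g (ns j) ω))) atTop ∂P :=
          lintegral_congr_ae hlim
      _ ≤ Filter.liminf
            (fun j => ∫⁻ ω, ENNReal.ofReal (Real.exp (t * partialSum g (ns j) ω)) ∂P)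
            atTop :=
          lintegral_liminf_le (fun j =>
            (Real.measurable_exp.comp ((hSmeas (ns j)).const_mul t)).ennreal_ofReal)
      _ ≤ Filter.liminf (fun _ : ℕ => ENNReal.ofReal C) atTop :=
          Filter.liminf_le_liminf (Filter.Eventually.of_forall hjb)
      _ = ENNReal.ofReal C := Filter.liminf_const _
  have heqfun : (fun ω => Real.exp (-β * (X ω / 2))) = fun ω => Real.exp (t * X ω) := by
    funext ω
    rw [htdef]
    ring_nf
  have hIntF : Integrable (fun ω => Real.exp (-β * (X ω / 2))) P := by
    rw [heqfun]
    constructor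
    · exact (Real.measurable_exp.comp_aemeasurable
        (hX.aestronglyMeasurable.aemeasurable.const_mul t)).aestronglyMeasurable
    · rw [hasFiniteIntegral_iff_ofReal (ae_of_all _ fun ω => (Real.exp_pos _).le)]
      exact lt_of_le_of_lt hFbound ENNReal.ofReal_lt_top
  have hpos : 0 < ∫ ω, Real.exp (-β * (X ω / 2)) ∂P := by
    rw [integral_pos_iff_support_of_nonneg (fun ω => (Real.exp_pos _).le) hIntF]
    have hsupp : Function.support (fun ω : Ω => Real.exp (-β * (X ω / 2))) = Set.univ :=
      Set.eq_univ_iff_forall.mpr fun ω => (Real.exp_pos _).ne'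
    rw [hsupp, measure_univ]
    exact one_pos
  refine ⟨hIntF, hpos, ⟨?_⟩⟩
  rw [withDensity_apply _ MeasurableSet.univ, Measure.restrict_univ]
  have h1 : ∫⁻ ω, ENNReal.ofReal
      (Real.exp (-β * (X ω / 2)) / ∫ ω', Real.exp (-β * (X ω' / 2)) ∂P) ∂P
      = ENNReal.ofReal (∫ ω, Real.exp (-β * (X ω / 2))
          / ∫ ω', Real.exp (-β * (X ω' / 2)) ∂P ∂P) :=
    (ofReal_integral_eq_lintegral_ofReal (hIntF.div_const _)
      (ae_of_all _ fun ω => div_nonneg (Real.exp_pos _).le hpos.le)).symm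
  rw [h1, integral_div, div_self hpos.ne', ENNReal.ofReal_one]
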